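/- Let G be a 2-connected simple graph and let e = {u, v} and f = {x, y} be two distinct edges of G sharing no endpoint. Then there exist two vertex-disjoint paths in G, one joining u to one endpoint of f and the other joining v to the other endpoint of f. -/

import Mathlib

/-!
In a 2-connected graph every vertex `u` has a fan to two distinct vertices `x` and `y`: a path
to `x` and a path to `y` meeting only in `u`. Fans are built backwards along a walk from `u` to
`x`, starting from the trivial fan at `x`. Given a fan from `z` and a neighbour `u` of `z`, a path
from `u` that avoids `z` first meets the fan in some `w ≠ z`, say on the branch to `x`; following
that branch on to `x`, and on the other side stepping from `u` to `z` and taking the branch to `y`,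
gives a fan from `u`. The same rerouting, applied to the fan from `u` and a path from `v` that
avoids `u`, yields the two disjoint paths.
-/

open SimpleGraph

def TwoConnected {V : Type*} [Fintype V] (G : SimpleGraph V) : Prop :=
  2 < Fintype.card V ∧ G.Connected ∧ ∀ v : V, (G.induce {x | x ≠ v}).Connected

namespace SimpleGraph

variable {V : Type*} {G : SimpleGraph V}

lemma exists_isPath_notMem_support_of_connected_induce [DecidableEq V] {w a b : V}
    (h : (G.induce {x | x ≠ w}).Connected) (ha : a ≠ w) (hb : b ≠ w) :
    ∃ p : G.Walk a b, p.IsPath ∧ w ∉ p.support := by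
  obtain ⟨q⟩ := h.preconnected ⟨a, ha⟩ ⟨b, hb⟩
  let q' : G.Walk a b := q.map (Embedding.induce {x | x ≠ w}).toHom
  refine ⟨q'.bypass, q'.bypass_isPath, fun hw => ?_⟩
  have hw' : w ∈ q'.support := q'.support_bypass_subset_support hw
  obtain ⟨c, -, hc⟩ := List.mem_map.mp ((Walk.support_map _ q) ▸ hw')
  exact c.2 hc

namespace Walk

lemma IsPath.append {u v w : V} {p : G.Walk u v} {q : G.Walk v w} (hp : p.IsPath)
    (hq : q.IsPath) (h : ∀ a ∈ p.support, a ∈ q.support → a = v) : (p.append q).IsPath := by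
  rw [isPath_def, support_append, List.nodup_append]
  refine ⟨hp.support_nodup, hq.support_nodup.sublist q.support.tail_sublist, ?_⟩
  rintro a hap b hbq rfl
  obtain rfl : a = v := h a hap (List.mem_of_mem_tail hbq)
  have hnd := hq.support_nodup
  rw [← cons_tail_support] at hnd
  exact (List.nodup_cons.mp hnd).1 hbq

structure IsFan {z x y : V} (p : G.Walk z x) (q : G.Walk z y) : Prop where
  isPath_left : p.IsPath
  isPath_right : q.IsPath
  eq_of_mem_of_mem : ∀ a ∈ p.support, a ∈ q.support → a = z

variable {z x y : V} {p : G.Walk z x} {q : G.Walk z y}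

lemma IsFan.symm (hf : IsFan p q) : IsFan q p :=
  ⟨hf.isPath_right, hf.isPath_left, fun a hq hp => hf.eq_of_mem_of_mem a hp hq⟩

lemma isFan_cons {u : V} {r : G.Walk u x} (hr : r.IsPath) (hq : q.IsPath)
    (hrq : r.support.Disjoint q.support) (huz : G.Adj u z) : IsFan r (cons huz q) := by
  refine ⟨hr, hq.cons fun hu => hrq r.start_mem_support hu, fun a har haq => ?_⟩
  rw [support_cons, List.mem_cons] at haq
  exact haq.resolve_right (hrq har)

variable [DecidableEq V]

lemma IsPath.eq_of_mem_takeUntil_of_mem_dropUntil {u v w a : V} {p : G.Walk u v}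
    (hp : p.IsPath) (hw : w ∈ p.support) (ht : a ∈ (p.takeUntil w hw).support)
    (hd : a ∈ (p.dropUntil w hw).support) : a = w := by
  by_contra ha
  rw [← p.take_spec hw] at hp
  exact hp.ne_of_mem_support_of_append ha ht hd rfl

lemma IsFan.isPath_and_disjoint_append_dropUntil {a w : V} (hf : IsFan p q) {T : G.Walk a w}
    (hT : T.IsPath) (hw : w ∈ p.support) (hwz : w ≠ z)
    (hTS : ∀ b ∈ T.support, b ∈ p.support ∨ b ∈ q.support → b = w) :
    (T.append (p.dropUntil w hw)).IsPath ∧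
      (T.append (p.dropUntil w hw)).support.Disjoint q.support := by
  have hwq : w ∉ q.support := fun h => hwz (hf.eq_of_mem_of_mem w hw h)
  refine ⟨hT.append (hf.isPath_left.dropUntil hw) fun b hbT hbd =>
    hTS b hbT (.inl (p.support_dropUntil_subset_support hw hbd)), fun b hb hbq => ?_⟩
  rcases (mem_support_append_iff _ _).mp hb with hbT | hbd
  · exact hwq (hTS b hbT (.inr hbq) ▸ hbq)
  · obtain rfl : b = z := hf.eq_of_mem_of_mem b (p.support_dropUntil_subset_support hw hbd) hbq
    exact hwz (hf.isPath_left.eq_of_mem_takeUntil_of_mem_dropUntil hw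
      (p.takeUntil w hw).start_mem_support hbd).symm

lemma IsFan.exists_disjoint_isPath (hG : ∀ w : V, (G.induce {a | a ≠ w}).Connected)
    (hxy : x ≠ y) (hf : IsFan p q) {a : V} (haz : a ≠ z) :
    (∃ r : G.Walk a x, r.IsPath ∧ r.support.Disjoint q.support) ∨
      (∃ r : G.Walk a y, r.IsPath ∧ r.support.Disjoint p.support) := by
  let S : Finset V := (p.support ++ q.support).toFinset
  have hS : ∀ b, b ∈ S ↔ b ∈ p.support ∨ b ∈ q.support := by simp [S]
  obtain ⟨t, htz, htS⟩ : ∃ t, t ≠ z ∧ t ∈ S := by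
    by_cases hzx : z = x
    · exact ⟨y, hzx ▸ hxy.symm, (hS y).mpr (.inr q.end_mem_support)⟩
    · exact ⟨x, Ne.symm hzx, (hS x).mpr (.inl p.end_mem_support)⟩
  obtain ⟨T₀, hT₀, hzT₀⟩ := exists_isPath_notMem_support_of_connected_induce (hG z) haz htz
  obtain ⟨w, hwS, hw, hfirst⟩ := T₀.exists_mem_support_forall_mem_support_imp_eq S
    ⟨t, Finset.mem_filter.mpr ⟨htS, T₀.end_mem_support⟩⟩
  have hT : (T₀.takeUntil w hw).IsPath := hT₀.takeUntil hw
  have hwz : w ≠ z := fun h => hzT₀ (h ▸ hw)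
  have hTS : ∀ b ∈ (T₀.takeUntil w hw).support, b ∈ p.support ∨ b ∈ q.support → b = w :=
    fun b hbT hb => hfirst b ((hS b).mpr hb) hbT
  rcases (hS w).mp hwS with hwp | hwq
  · exact .inl ⟨_, hf.isPath_and_disjoint_append_dropUntil hT hwp hwz hTS⟩
  · exact .inr ⟨_, hf.symm.isPath_and_disjoint_append_dropUntil hT hwq hwz
      fun b hbT hb => hTS b hbT hb.symm⟩

theorem exists_isFan (hconn : G.Connected) (hG : ∀ w : V, (G.induce {a | a ≠ w}).Connected)
    (hxy : x ≠ y) (u : V) : ∃ (p : G.Walk u x) (q : G.Walk u y), IsFan p q := by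
  obtain ⟨W⟩ := hconn.preconnected u x
  induction W with
  | nil =>
    obtain ⟨q⟩ := hconn.preconnected _ y
    exact ⟨nil, q.bypass, .nil, q.bypass_isPath, by simp⟩
  | cons huz W ih =>
    obtain ⟨p, q, hf⟩ := ih hxy
    rcases hf.exists_disjoint_isPath hG hxy huz.ne with ⟨r, hr, hrq⟩ | ⟨r, hr, hrp⟩
    · exact ⟨r, cons huz q, isFan_cons hr hf.isPath_right hrq huz⟩
    · exact ⟨cons huz p, r, (isFan_cons hr hf.isPath_left hrp huz).symm⟩

end Walk

end SimpleGraph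

theorem stmt_13_general {V : Type*} [Fintype V] (G : SimpleGraph V) (hG : TwoConnected G)
    (u v x y : V) (he : G.Adj u v) (hf : G.Adj x y) :
    (∃ (p : G.Walk u x) (q : G.Walk v y), p.IsPath ∧ q.IsPath ∧
      p.support.Disjoint q.support) ∨
    (∃ (p : G.Walk u y) (q : G.Walk v x), p.IsPath ∧ q.IsPath ∧
      p.support.Disjoint q.support) := by
  classical
  obtain ⟨-, hconn, hdel⟩ := hG
  obtain ⟨p, q, hfan⟩ := Walk.exists_isFan hconn hdel hf.ne u
  rcases hfan.exists_disjoint_isPath hdel hf.ne he.ne' with ⟨r, hr, hrq⟩ | ⟨r, hr, hrp⟩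
  · exact .inr ⟨q, r, hfan.isPath_right, hr, hrq.symm⟩
  · exact .inl ⟨p, r, hfan.isPath_left, hr, hrp.symm⟩

/-- In a 2-connected graph, given two edges `{u, v}` and `{x, y}` sharing no
endpoint, there are two vertex-disjoint paths joining the endpoints of the
first edge to the endpoints of the second (in one of the two pairings). -/
theorem stmt_13 {V : Type*} [Fintype V] (G : SimpleGraph V) (hG : TwoConnected G)
    (u v x y : V) (he : G.Adj u v) (hf : G.Adj x y)
    (hux : u ≠ x) (huy : u ≠ y) (hvx : v ≠ x) (hvy : v ≠ y) :
    (∃ (p : G.Walk u x) (q : G.Walk v y), p.IsPath ∧ q.IsPath ∧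
      p.support.Disjoint q.support) ∨
    (∃ (p : G.Walk u y) (q : G.Walk v x), p.IsPath ∧ q.IsPath ∧
      p.support.Disjoint q.support) :=
  stmt_13_general G hG u v x y he hf
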